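/- Let d = 2, h = 0, and let k : Z^2 → ℝ be symmetric with k(i) = 0 for |i| > 1, k(0) ≤ 0, k(e_1) < 0, k(e_2) < 0. Let μ^+ (resp. μ^−) be the infinite-volume Gibbs measure for the potential Φ obtained as weak limit of the finite-volume measures with + (resp. −) boundary conditions. Suppose β is large enough that μ^+ ≠ μ^−. Then μ^+ is not stationary for the infinite-volume PCA P: Pμ^+ ≠ μ^+. -/

import Mathlib

/-!
Since `k ≤ 0`, the local field `Σ_j k(i-j) σ_j` is antitone in `σ`, and the Gibbs weight
`∏_i cosh(β Σ_j k(i-j) σ_j)` satisfies the Holley lattice condition. Hence the finite volume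
Gibbs measures are monotone in the boundary condition and, by DLR consistency, in the volume:
`μ⁻` is stochastically below `μ⁺`, and by the spin flip symmetry `μ⁻` is the flip of `μ⁺`, so
`μ⁻` is stationary whenever `μ⁺` is. For a stationary `μ`,
`μ(σ_T ≡ +) = ∫ ∏_{j ∈ T} p_j(+ | η) dμ(η)` with an integrand that decreases in `η`, so the
stochastic order of `μ⁻` and `μ⁺` yields both inequalities between `μ^±(σ_T ≡ +)`. These
probabilities determine a measure, whence `μ⁺ = μ⁻`.
-/

open MeasureTheory Filter

namespace PCA

noncomputable section

/-- Sites of the lattice `ℤ^d`. -/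
abbrev Site (d : ℕ) := Fin d → ℤ

/-- Spin configurations on `ℤ^d` with spins in `{-1,1}` encoded by `Bool`. -/
abbrev Conf (d : ℕ) := Site d → Bool

/-- The real value of a spin: `true ↦ 1`, `false ↦ -1`. -/
def val (b : Bool) : ℝ := if b then 1 else -1

/-- Squared Euclidean norm of a site. -/
def normSq {d : ℕ} (i : Site d) : ℤ := ∑ t, (i t) ^ 2

/-- The local field `Σ_j k(i-j) η_j`. -/
def field {d : ℕ} (k : Site d → ℝ) (i : Site d) (η : Conf d) : ℝ :=
  ∑' j : Site d, k (i - j) * val (η j)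

/-- Single site updating probability
`p_i(s|η) = (1 + s tanh(β Σ_j k(i-j) η_j + β h))/2`. -/
def pval {d : ℕ} (β h : ℝ) (k : Site d → ℝ) (i : Site d) (s : Bool) (η : Conf d) : ℝ :=
  (1 + val s * Real.tanh (β * field k i η + β * h)) / 2

/-- The configuration equal to `a` on `Λ` and to `τ` outside `Λ`. -/
def fill {d : ℕ} (Λ : Finset (Site d)) (a : ↥Λ → Bool) (τ : Conf d) : Conf d :=
  fun j => if h : j ∈ Λ then a ⟨j, h⟩ else τ j

/-- Finite volume PCA transition probability with boundary condition `τ`: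
`P_Λ^τ(σ|η) = ∏_{i ∈ Λ} p_i(σ_i | η_Λ τ_{Λ^c})`. -/
def Pfin {d : ℕ} (β h : ℝ) (k : Site d → ℝ) (Λ : Finset (Site d)) (τ : Conf d)
    (σ η : ↥Λ → Bool) : ℝ :=
  ∏ i : ↥Λ, pval β h k i.1 (σ i) (fill Λ η τ)

/-- The boundary field `Σ_{j ∈ Λ^c} k(i-j) τ_j`. -/
def outField {d : ℕ} (k : Site d → ℝ) (Λ : Finset (Site d)) (τ : Conf d) (i : Site d) : ℝ :=
  ∑' j : Site d, if j ∈ Λ then 0 else k (i - j) * val (τ j)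

/-- Unnormalized stationary measure of the finite volume PCA:
`∏_{i∈Λ} e^{βhσ_i} cosh(β Σ_j k(i-j) σ̃_j + βh) e^{β σ_i Σ_{j∈Λ^c} k(i-j) τ_j}`. -/
def nuNum {d : ℕ} (β h : ℝ) (k : Site d → ℝ) (Λ : Finset (Site d)) (τ : Conf d)
    (σ : ↥Λ → Bool) : ℝ :=
  ∏ i : ↥Λ,
    Real.exp (β * h * val (σ i))
      * Real.cosh (β * field k i.1 (fill Λ σ τ) + β * h)
      * Real.exp (β * val (σ i) * outField k Λ τ i.1)

/-- The normalized stationary measure `ν_Λ^τ`. -/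
def nu {d : ℕ} (β h : ℝ) (k : Site d → ℝ) (Λ : Finset (Site d)) (τ : Conf d)
    (σ : ↥Λ → Bool) : ℝ :=
  nuNum β h k Λ τ σ / ∑ σ' : ↥Λ → Bool, nuNum β h k Λ τ σ'


/-- The cylinder set of configurations agreeing with `a` on `Λ`. -/
def cylB {d : ℕ} (Λ : Finset (Site d)) (a : ↥Λ → Bool) : Set (Conf d) :=
  {σ : Conf d | ∀ j : ↥Λ, σ j.1 = a j}

/-- `P` is the (infinite volume) PCA kernel with single site probabilities `pval β h k`:
on every cylinder, `P(·|η)` is the product of the single site probabilities. -/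
def IsPCAB {d : ℕ} (β h : ℝ) (k : Site d → ℝ)
    (P : ProbabilityTheory.Kernel (Conf d) (Conf d)) : Prop :=
  ∀ (η : Conf d) (Λ : Finset (Site d)) (a : ↥Λ → Bool),
    P η (cylB Λ a) = ∏ j : ↥Λ, ENNReal.ofReal (pval β h k j.1 (a j) η)

/-- The Hamiltonian `H_Λ^τ(a) = Σ_{A ∩ Λ ≠ ∅} Φ_A(a_Λ τ_{Λ^c})` for the potential
`Φ_{{i}}(σ) = -βhσ_i`, `Φ_{U_i}(σ) = -log cosh(β Σ_j k(i-j)σ_j + βh)`,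
`U_i = {j : k(i-j) ≠ 0}`, and `Φ_A = 0` otherwise. -/
def hamB {d : ℕ} (β h : ℝ) (k : Site d → ℝ) (Λ : Finset (Site d)) (a : ↥Λ → Bool)
    (τ : Conf d) : ℝ :=
  (∑ i : ↥Λ, -(β * h * val (a i))) +
    ∑' i : Site d,
      Set.indicator {i : Site d | ∃ j ∈ Λ, k (i - j) ≠ 0}
        (fun i => -Real.log (Real.cosh (β * field k i (fill Λ a τ) + β * h))) i

/-- The finite volume Gibbs weight `μ_Λ^τ(a) = exp(-H_Λ^τ(a))/Z_Λ^τ`. -/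
def gibbsWB {d : ℕ} (β h : ℝ) (k : Site d → ℝ) (Λ : Finset (Site d)) (a : ↥Λ → Bool)
    (τ : Conf d) : ℝ :=
  Real.exp (-hamB β h k Λ a τ) / ∑ b : ↥Λ → Bool, Real.exp (-hamB β h k Λ b τ)

/-- The σ-algebra generated by the spins outside `Λ`. -/
def outer {d : ℕ} (Λ : Finset (Site d)) : MeasurableSpace (Conf d) :=
  MeasurableSpace.comap (fun σ (j : {j : Site d // j ∉ Λ}) => σ j.1) MeasurableSpace.pi

/-- `μ` is a Gibbs measure for the potential associated to `β`, `h`, `k` (DLR equations):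
for every finite `Λ`, conditionally on the configuration outside `Λ`, the configuration
on `Λ` is distributed according to the finite volume Gibbs measure. -/
def IsGibbsB {d : ℕ} (β h : ℝ) (k : Site d → ℝ) (μ : Measure (Conf d)) : Prop :=
  ∀ (Λ : Finset (Site d)) (a : ↥Λ → Bool) (B : Set (Conf d)),
    MeasurableSet[outer Λ] B →
    μ (cylB Λ a ∩ B) = ∫⁻ τ in B, ENNReal.ofReal (gibbsWB β h k Λ a τ) ∂μ

/-- First standard basis vector of `ℤ²`. -/
def e1 : Site 2 := ![1, 0]

/-- Second standard basis vector of `ℤ²`. -/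
def e2 : Site 2 := ![0, 1]

/-- The centered hypercube `[-n,n]^d ∩ ℤ^d`. -/
def boxCc {d : ℕ} (n : ℕ) : Finset (Site d) :=
  Fintype.piFinset fun _ => Finset.Icc (-(n : ℤ)) (n : ℤ)

/-- A local function on configuration space: it depends on finitely many spins. -/
def LocalFun {d : ℕ} (f : Conf d → ℝ) : Prop :=
  ∃ Δ : Finset (Site d), ∀ σ σ' : Conf d, (∀ j ∈ Δ, σ j = σ' j) → f σ = f σ'

/-- The finite volume Gibbs measure `μ_Λ^τ` (for `h = 0`) viewed as a probability measure
on the whole configuration space, extending configurations by `τ` outside `Λ`. -/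
def gibbsMeas (β : ℝ) (k : Site 2 → ℝ) (Λ : Finset (Site 2)) (τ : Conf 2) :
    Measure (Conf 2) :=
  ∑ a : ↥Λ → Bool, ENNReal.ofReal (gibbsWB β 0 k Λ a τ) • Measure.dirac (fill Λ a τ)

open scoped Pointwise

section Spins

variable {d : ℕ}

lemma val_compl (b : Bool) : val bᶜ = -val b := by cases b <;> simp [val]

lemma val_mono : Monotone val := by
  intro b b' h
  cases b <;> cases b' <;> first | exact absurd h (by decide) | norm_num [val]

lemma val_inf_add_val_sup (a b : Bool) : val (a ⊓ b) + val (a ⊔ b) = val a + val b := by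
  cases a <;> cases b <;> simp [val]

lemma fill_apply_of_mem {Λ : Finset (Site d)} (a : ↥Λ → Bool) (τ : Conf d) {j : Site d}
    (hj : j ∈ Λ) : fill Λ a τ j = a ⟨j, hj⟩ := dif_pos hj

lemma fill_apply_of_notMem {Λ : Finset (Site d)} (a : ↥Λ → Bool) (τ : Conf d) {j : Site d}
    (hj : j ∉ Λ) : fill Λ a τ j = τ j := dif_neg hj

lemma fill_mono {Λ : Finset (Site d)} {a a' : ↥Λ → Bool} {τ τ' : Conf d}
    (ha : a ≤ a') (hτ : τ ≤ τ') : fill Λ a τ ≤ fill Λ a' τ' := by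
  intro j
  by_cases hj : j ∈ Λ
  · simpa only [fill_apply_of_mem _ _ hj] using ha ⟨j, hj⟩
  · simpa only [fill_apply_of_notMem _ _ hj] using hτ j

lemma fill_compl (Λ : Finset (Site d)) (a : ↥Λ → Bool) (τ : Conf d) :
    fill Λ aᶜ τᶜ = (fill Λ a τ)ᶜ := by
  funext j
  by_cases hj : j ∈ Λ <;> simp [fill, hj]

lemma measurable_compl_conf : Measurable (compl : Conf d → Conf d) :=
  measurable_pi_lambda _ fun j =>
    (measurable_of_countable (compl : Bool → Bool)).comp (measurable_pi_apply j)

end Spins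

lemma tanh_monotone : Monotone Real.tanh := by
  intro x y h
  rw [Real.tanh_eq_sinh_div_cosh, Real.tanh_eq_sinh_div_cosh,
    div_le_div_iff₀ (Real.cosh_pos x) (Real.cosh_pos y)]
  nlinarith [Real.sinh_nonneg_iff.2 (sub_nonneg.2 h), Real.sinh_sub y x]

lemma cosh_mul_cosh_le_of_add_eq {u₁ u₂ v₁ v₂ : ℝ} (hsum : v₁ + v₂ = u₁ + u₂) (h₁ : v₁ ≤ u₂)
    (h₂ : v₂ ≤ u₂) : Real.cosh v₁ * Real.cosh v₂ ≤ Real.cosh u₁ * Real.cosh u₂ := by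
  have hprod : ∀ x y : ℝ, 2 * (Real.cosh x * Real.cosh y) = Real.cosh (x + y) + Real.cosh (x - y) :=
    fun x y => by rw [Real.cosh_add, Real.cosh_sub]; ring
  have hspread : |v₁ - v₂| ≤ |u₁ - u₂| := by
    rw [abs_sub_comm u₁, abs_of_nonneg (a := u₂ - u₁) (by linarith), abs_le]
    constructor <;> linarith
  have hv := hprod v₁ v₂
  rw [hsum] at hv
  linarith [hprod u₁ u₂, Real.cosh_le_cosh.2 hspread]

section Field

variable {d : ℕ} {k : Site d → ℝ} {R : Finset (Site d)}

lemma field_eq_sum (hR : ∀ x ∉ R, k x = 0) (i : Site d) (η : Conf d) :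
    field k i η = ∑ x ∈ R, k x * val (η (i - x)) := by
  rw [field, ← (Equiv.subLeft i).tsum_eq]
  simp only [Equiv.subLeft_apply, sub_sub_cancel]
  exact tsum_eq_sum fun x hx => by rw [hR x hx, zero_mul]

lemma field_antitone (hR : ∀ x ∉ R, k x = 0) (hk : ∀ x, k x ≤ 0) (i : Site d) :
    Antitone (field k i) := by
  intro η η' h
  simp only [field_eq_sum hR]
  exact Finset.sum_le_sum fun x _ => mul_le_mul_of_nonpos_left (val_mono (h _)) (hk x)

lemma field_compl (i : Site d) (η : Conf d) : field k i ηᶜ = -field k i η := by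
  rw [field, field, ← tsum_neg]
  congr 1
  funext j
  rw [Pi.compl_apply, val_compl, mul_neg]

lemma field_congr (hR : ∀ x ∉ R, k x = 0) {i : Site d} {η η' : Conf d}
    (h : ∀ x ∈ R, η (i - x) = η' (i - x)) : field k i η = field k i η' := by
  simp only [field_eq_sum hR]
  exact Finset.sum_congr rfl fun x hx => by rw [h x hx]

lemma field_add_field (hR : ∀ x ∉ R, k x = 0) (i : Site d) {σ₁ σ₂ σ₃ σ₄ : Conf d}
    (h : ∀ j, val (σ₁ j) + val (σ₂ j) = val (σ₃ j) + val (σ₄ j)) :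
    field k i σ₁ + field k i σ₂ = field k i σ₃ + field k i σ₄ := by
  simp only [field_eq_sum hR, ← Finset.sum_add_distrib, ← mul_add, h]

end Field

section Gibbs

variable {d : ℕ} {β : ℝ} {k : Site d → ℝ} {R : Finset (Site d)}

open scoped Classical in
/-- The sites `i` with `Φ_{U_i}` in the Hamiltonian of `Λ`; intersecting with `Λ + R` only
makes the set visibly finite (see `mem_interactionSites`). -/
def interactionSites (k : Site d → ℝ) (R Λ : Finset (Site d)) : Finset (Site d) :=
  (Λ + R).filter fun i => ∃ j ∈ Λ, k (i - j) ≠ 0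

lemma mem_interactionSites (hR : ∀ x ∉ R, k x = 0) {Λ : Finset (Site d)} {i : Site d} :
    i ∈ interactionSites k R Λ ↔ ∃ j ∈ Λ, k (i - j) ≠ 0 := by
  refine ⟨fun h => (Finset.mem_filter.1 h).2, fun h => Finset.mem_filter.2 ⟨?_, h⟩⟩
  obtain ⟨j, hj, hkj⟩ := h
  have hR' : i - j ∈ R := by
    by_contra h
    exact hkj (hR _ h)
  simpa using Finset.add_mem_add hj hR'

lemma interactionSites_mono {Λ Λ' : Finset (Site d)} (hΛ : Λ ⊆ Λ') :
    interactionSites k R Λ ⊆ interactionSites k R Λ' := by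
  intro i hi
  obtain ⟨hiΛR, j, hj, hkj⟩ := Finset.mem_filter.1 hi
  exact Finset.mem_filter.2 ⟨Finset.add_subset_add_right hΛ hiΛR, j, hΛ hj, hkj⟩

lemma field_fill_eq_of_notMem (hR : ∀ x ∉ R, k x = 0) {Λ : Finset (Site d)} {i : Site d}
    (hi : i ∉ interactionSites k R Λ) (a b : ↥Λ → Bool) (τ : Conf d) :
    field k i (fill Λ a τ) = field k i (fill Λ b τ) := by
  rw [mem_interactionSites hR] at hi
  push Not at hi
  refine tsum_congr fun j => ?_
  by_cases hj : j ∈ Λ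
  · rw [hi j hj, zero_mul, zero_mul]
  · rw [fill_apply_of_notMem _ _ hj, fill_apply_of_notMem _ _ hj]

def gibbsWeight (β : ℝ) (k : Site d → ℝ) (Λ : Finset (Site d)) (a : ↥Λ → Bool) (τ : Conf d) :
    ℝ :=
  Real.exp (-hamB β 0 k Λ a τ)

lemma gibbsWeight_eq_prod (hR : ∀ x ∉ R, k x = 0) (Λ : Finset (Site d)) (a : ↥Λ → Bool)
    (τ : Conf d) :
    gibbsWeight β k Λ a τ
      = ∏ i ∈ interactionSites k R Λ, Real.cosh (β * field k i (fill Λ a τ)) := by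
  rw [gibbsWeight, hamB, tsum_eq_sum (s := interactionSites k R Λ) fun i hi =>
      Set.indicator_of_notMem (s := {i | ∃ j ∈ Λ, k (i - j) ≠ 0})
        (fun h => hi ((mem_interactionSites hR).2 h)) _,
    Finset.sum_congr rfl fun i hi =>
      Set.indicator_of_mem (s := {i | ∃ j ∈ Λ, k (i - j) ≠ 0})
        ((mem_interactionSites hR).1 hi) _]
  simp only [mul_zero, zero_mul, add_zero, neg_zero, Finset.sum_const_zero, zero_add,
    Finset.sum_neg_distrib, neg_neg, Real.exp_sum]
  exact Finset.prod_congr rfl fun i _ => Real.exp_log (Real.cosh_pos _)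

lemma gibbsWeight_pos {Λ : Finset (Site d)} {a : ↥Λ → Bool} {τ : Conf d} :
    0 < gibbsWeight β k Λ a τ :=
  Real.exp_pos _

lemma sum_gibbsWeight_pos (Λ : Finset (Site d)) (τ : Conf d) :
    0 < ∑ b : ↥Λ → Bool, gibbsWeight β k Λ b τ :=
  Finset.sum_pos (fun _ _ => gibbsWeight_pos) Finset.univ_nonempty

lemma gibbsWB_eq_div (Λ : Finset (Site d)) (a : ↥Λ → Bool) (τ : Conf d) :
    gibbsWB β 0 k Λ a τ = gibbsWeight β k Λ a τ / ∑ b, gibbsWeight β k Λ b τ :=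
  rfl

lemma gibbsWB_nonneg (Λ : Finset (Site d)) (a : ↥Λ → Bool) (τ : Conf d) :
    0 ≤ gibbsWB β 0 k Λ a τ :=
  div_nonneg gibbsWeight_pos.le (sum_gibbsWeight_pos Λ τ).le

lemma sum_gibbsWB (Λ : Finset (Site d)) (τ : Conf d) :
    ∑ a : ↥Λ → Bool, gibbsWB β 0 k Λ a τ = 1 := by
  simp only [gibbsWB_eq_div, ← Finset.sum_div]
  exact div_self (sum_gibbsWeight_pos Λ τ).ne'

/-- The Holley condition: at each interaction site the fields of `a ⊓ b` and `a ⊔ b` are the more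
spread out pair with the same sum, since `k ≤ 0` makes the field antitone. -/
lemma gibbsWeight_mul_le (hβ : 0 ≤ β) (hR : ∀ x ∉ R, k x = 0) (hk : ∀ x, k x ≤ 0)
    {Λ : Finset (Site d)} {τ τ' : Conf d} (hτ : τ ≤ τ') (a b : ↥Λ → Bool) :
    gibbsWeight β k Λ a τ * gibbsWeight β k Λ b τ'
      ≤ gibbsWeight β k Λ (a ⊓ b) τ * gibbsWeight β k Λ (a ⊔ b) τ' := by
  simp only [gibbsWeight_eq_prod hR, ← Finset.prod_mul_distrib]
  refine Finset.prod_le_prod (fun i _ => by positivity) fun i _ => ?_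
  have hsum : ∀ j, val (fill Λ a τ j) + val (fill Λ b τ' j)
      = val (fill Λ (a ⊔ b) τ' j) + val (fill Λ (a ⊓ b) τ j) := by
    intro j
    by_cases hj : j ∈ Λ
    · simp only [fill_apply_of_mem _ _ hj, Pi.sup_apply, Pi.inf_apply]
      linarith [val_inf_add_val_sup (a ⟨j, hj⟩) (b ⟨j, hj⟩)]
    · simp only [fill_apply_of_notMem _ _ hj]
      ring
  rw [mul_comm (Real.cosh (β * field k i (fill Λ (a ⊓ b) τ)))]
  apply cosh_mul_cosh_le_of_add_eq
  · rw [← mul_add, ← mul_add, field_add_field hR i hsum]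
  · exact mul_le_mul_of_nonneg_left (field_antitone hR hk i (fill_mono inf_le_left le_rfl)) hβ
  · exact mul_le_mul_of_nonneg_left (field_antitone hR hk i (fill_mono inf_le_right hτ)) hβ

lemma gibbsWB_mul_le (hβ : 0 ≤ β) (hR : ∀ x ∉ R, k x = 0) (hk : ∀ x, k x ≤ 0)
    {Λ : Finset (Site d)} {τ τ' : Conf d} (hτ : τ ≤ τ') (a b : ↥Λ → Bool) :
    gibbsWB β 0 k Λ a τ * gibbsWB β 0 k Λ b τ'
      ≤ gibbsWB β 0 k Λ (a ⊓ b) τ * gibbsWB β 0 k Λ (a ⊔ b) τ' := by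
  simp only [gibbsWB_eq_div, div_mul_div_comm]
  exact div_le_div_of_nonneg_right (gibbsWeight_mul_le hβ hR hk hτ a b)
    (mul_pos (sum_gibbsWeight_pos Λ τ) (sum_gibbsWeight_pos Λ τ')).le

lemma sum_mul_gibbsWB_le (hβ : 0 ≤ β) (hR : ∀ x ∉ R, k x = 0) (hk : ∀ x, k x ≤ 0)
    {Λ : Finset (Site d)} {τ τ' : Conf d} (hτ : τ ≤ τ') {g : (↥Λ → Bool) → ℝ} (hg₀ : 0 ≤ g)
    (hg : Monotone g) :
    ∑ a, g a * gibbsWB β 0 k Λ a τ ≤ ∑ a, g a * gibbsWB β 0 k Λ a τ' :=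
  holley _ _ g hg₀ (fun a => gibbsWB_nonneg Λ a τ) (fun a => gibbsWB_nonneg Λ a τ') hg
    (by rw [sum_gibbsWB, sum_gibbsWB]) (gibbsWB_mul_le hβ hR hk hτ)

def gibbsAvg (β : ℝ) (k : Site d → ℝ) (Λ : Finset (Site d)) (τ : Conf d) (G : Conf d → ℝ) : ℝ :=
  ∑ a : ↥Λ → Bool, G (fill Λ a τ) * gibbsWB β 0 k Λ a τ

lemma gibbsAvg_mono_boundary (hβ : 0 ≤ β) (hR : ∀ x ∉ R, k x = 0) (hk : ∀ x, k x ≤ 0)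
    {Λ : Finset (Site d)} {G : Conf d → ℝ} (hG₀ : 0 ≤ G) (hG : Monotone G) {τ τ' : Conf d}
    (hτ : τ ≤ τ') :
    gibbsAvg β k Λ τ G ≤ gibbsAvg β k Λ τ' G :=
  calc gibbsAvg β k Λ τ G ≤ ∑ a, G (fill Λ a τ') * gibbsWB β 0 k Λ a τ :=
        Finset.sum_le_sum fun a _ =>
          mul_le_mul_of_nonneg_right (hG (fill_mono le_rfl hτ)) (gibbsWB_nonneg Λ a τ)
    _ ≤ gibbsAvg β k Λ τ' G :=
        sum_mul_gibbsWB_le hβ hR hk hτ (fun _ => hG₀ _) fun _ _ h => hG (fill_mono h le_rfl)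

end Gibbs

section Consistency

variable {d : ℕ} {β : ℝ} {k : Site d → ℝ} {R : Finset (Site d)} {Λ Λ' : Finset (Site d)}

def glue (a : ↥Λ → Bool) (t : ↥(Λ' \ Λ) → Bool) : ↥Λ' → Bool :=
  fun i => if h : i.1 ∈ Λ then a ⟨i.1, h⟩ else t ⟨i.1, Finset.mem_sdiff.2 ⟨i.2, h⟩⟩

def glueEquiv (hΛ : Λ ⊆ Λ') : ((↥Λ → Bool) × (↥(Λ' \ Λ) → Bool)) ≃ (↥Λ' → Bool) where
  toFun p := glue p.1 p.2
  invFun a' := (fun i => a' ⟨i.1, hΛ i.2⟩, fun i => a' ⟨i.1, (Finset.mem_sdiff.1 i.2).1⟩)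
  left_inv p := by
    ext i
    · simp [glue, i.2]
    · simp [glue, (Finset.mem_sdiff.1 i.2).2]
  right_inv a' := by
    funext i
    by_cases h : i.1 ∈ Λ <;> simp [glue, h]

lemma sum_glue (hΛ : Λ ⊆ Λ') (f : (↥Λ' → Bool) → ℝ) :
    ∑ t : ↥(Λ' \ Λ) → Bool, ∑ a : ↥Λ → Bool, f (glue a t) = ∑ a', f a' := by
  rw [← (glueEquiv hΛ).sum_comp, Fintype.sum_prod_type, Finset.sum_comm]
  rfl

lemma fill_glue (hΛ : Λ ⊆ Λ') (a : ↥Λ → Bool) (t : ↥(Λ' \ Λ) → Bool) (τ : Conf d) :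
    fill Λ' (glue a t) τ = fill Λ a (fill (Λ' \ Λ) t τ) := by
  funext j
  by_cases h : j ∈ Λ
  · simp [fill, glue, h, hΛ h]
  · by_cases h' : j ∈ Λ' <;> simp [fill, glue, h, h']

/-- The Hamiltonians of `Λ ⊆ Λ'` differ by terms not involving the spins in `Λ`. -/
lemma gibbsWeight_glue_mul (hR : ∀ x ∉ R, k x = 0) (hΛ : Λ ⊆ Λ') (a b : ↥Λ → Bool)
    (t : ↥(Λ' \ Λ) → Bool) (τ : Conf d) :
    gibbsWeight β k Λ' (glue a t) τ * gibbsWeight β k Λ b (fill (Λ' \ Λ) t τ)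
      = gibbsWeight β k Λ' (glue b t) τ * gibbsWeight β k Λ a (fill (Λ' \ Λ) t τ) := by
  simp only [gibbsWeight_eq_prod hR, fill_glue hΛ,
    ← Finset.prod_sdiff (interactionSites_mono (k := k) (R := R) hΛ)]
  rw [Finset.prod_congr rfl fun i hi =>
    congrArg (fun x => Real.cosh (β * x))
      (field_fill_eq_of_notMem hR (Finset.mem_sdiff.1 hi).2 a b (fill (Λ' \ Λ) t τ))]
  ring

/-- DLR consistency; the first factor is the marginal of `t` under `μ_{Λ'}^τ`. -/
lemma gibbsWB_glue (hR : ∀ x ∉ R, k x = 0) (hΛ : Λ ⊆ Λ') (a : ↥Λ → Bool)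
    (t : ↥(Λ' \ Λ) → Bool) (τ : Conf d) :
    gibbsWB β 0 k Λ' (glue a t) τ
      = (∑ b, gibbsWB β 0 k Λ' (glue b t) τ) * gibbsWB β 0 k Λ a (fill (Λ' \ Λ) t τ) := by
  have key : gibbsWeight β k Λ' (glue a t) τ * ∑ b, gibbsWeight β k Λ b (fill (Λ' \ Λ) t τ)
      = (∑ b, gibbsWeight β k Λ' (glue b t) τ) * gibbsWeight β k Λ a (fill (Λ' \ Λ) t τ) := by
    rw [Finset.mul_sum, Finset.sum_mul]
    exact Finset.sum_congr rfl fun b _ => gibbsWeight_glue_mul hR hΛ a b t τ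
  have hZ := sum_gibbsWeight_pos (β := β) (k := k) Λ (fill (Λ' \ Λ) t τ)
  have hZ' := sum_gibbsWeight_pos (β := β) (k := k) Λ' τ
  simp only [gibbsWB_eq_div, ← Finset.sum_div]
  field_simp
  linear_combination key

lemma sum_sum_gibbsWB_glue (hΛ : Λ ⊆ Λ') (τ : Conf d) :
    ∑ t : ↥(Λ' \ Λ) → Bool, ∑ a : ↥Λ → Bool, gibbsWB β 0 k Λ' (glue a t) τ = 1 := by
  rw [sum_glue hΛ (fun a' => gibbsWB β 0 k Λ' a' τ), sum_gibbsWB]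

lemma gibbsAvg_eq_sum (hR : ∀ x ∉ R, k x = 0) (hΛ : Λ ⊆ Λ') (τ : Conf d) (G : Conf d → ℝ) :
    gibbsAvg β k Λ' τ G = ∑ t : ↥(Λ' \ Λ) → Bool,
      (∑ a, gibbsWB β 0 k Λ' (glue a t) τ) * gibbsAvg β k Λ (fill (Λ' \ Λ) t τ) G := by
  rw [gibbsAvg, ← sum_glue hΛ (fun a' => G (fill Λ' a' τ) * gibbsWB β 0 k Λ' a' τ)]
  refine Finset.sum_congr rfl fun t _ => ?_
  rw [gibbsAvg, Finset.mul_sum]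
  refine Finset.sum_congr rfl fun a _ => ?_
  rw [fill_glue hΛ, gibbsWB_glue hR hΛ]
  ring

lemma gibbsAvg_true_anti_volume (hβ : 0 ≤ β) (hR : ∀ x ∉ R, k x = 0) (hk : ∀ x, k x ≤ 0)
    (hΛ : Λ ⊆ Λ') {G : Conf d → ℝ} (hG₀ : 0 ≤ G) (hG : Monotone G) :
    gibbsAvg β k Λ' (fun _ => true) G ≤ gibbsAvg β k Λ (fun _ => true) G := by
  rw [gibbsAvg_eq_sum hR hΛ]
  calc _ ≤ ∑ t : ↥(Λ' \ Λ) → Bool, (∑ a, gibbsWB β 0 k Λ' (glue a t) (fun _ => true))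
          * gibbsAvg β k Λ (fun _ => true) G :=
        Finset.sum_le_sum fun t _ => mul_le_mul_of_nonneg_left
          (gibbsAvg_mono_boundary hβ hR hk hG₀ hG fun _ => Bool.le_true _)
          (Finset.sum_nonneg fun a _ => gibbsWB_nonneg _ _ _)
    _ = _ := by rw [← Finset.sum_mul, sum_sum_gibbsWB_glue hΛ, one_mul]

lemma gibbsAvg_false_mono_volume (hβ : 0 ≤ β) (hR : ∀ x ∉ R, k x = 0) (hk : ∀ x, k x ≤ 0)
    (hΛ : Λ ⊆ Λ') {G : Conf d → ℝ} (hG₀ : 0 ≤ G) (hG : Monotone G) :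
    gibbsAvg β k Λ (fun _ => false) G ≤ gibbsAvg β k Λ' (fun _ => false) G := by
  rw [gibbsAvg_eq_sum hR hΛ]
  calc gibbsAvg β k Λ (fun _ => false) G
      = ∑ t : ↥(Λ' \ Λ) → Bool, (∑ a, gibbsWB β 0 k Λ' (glue a t) (fun _ => false))
          * gibbsAvg β k Λ (fun _ => false) G := by
        rw [← Finset.sum_mul, sum_sum_gibbsWB_glue hΛ, one_mul]
    _ ≤ _ :=
        Finset.sum_le_sum fun t _ => mul_le_mul_of_nonneg_left
          (gibbsAvg_mono_boundary hβ hR hk hG₀ hG fun _ => Bool.false_le _)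
          (Finset.sum_nonneg fun a _ => gibbsWB_nonneg _ _ _)

lemma gibbsAvg_false_le_true (hβ : 0 ≤ β) (hR : ∀ x ∉ R, k x = 0) (hk : ∀ x, k x ≤ 0)
    (Λ Λ' : Finset (Site d)) {G : Conf d → ℝ} (hG₀ : 0 ≤ G) (hG : Monotone G) :
    gibbsAvg β k Λ (fun _ => false) G ≤ gibbsAvg β k Λ' (fun _ => true) G :=
  calc gibbsAvg β k Λ (fun _ => false) G
      ≤ gibbsAvg β k (Λ ∪ Λ') (fun _ => false) G :=
        gibbsAvg_false_mono_volume hβ hR hk Finset.subset_union_left hG₀ hG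
    _ ≤ gibbsAvg β k (Λ ∪ Λ') (fun _ => true) G :=
        gibbsAvg_mono_boundary hβ hR hk hG₀ hG fun _ => Bool.false_le _
    _ ≤ gibbsAvg β k Λ' (fun _ => true) G :=
        gibbsAvg_true_anti_volume hβ hR hk Finset.subset_union_right hG₀ hG

end Consistency

section SpinFlip

variable {d : ℕ} {β : ℝ} {k : Site d → ℝ}

lemma hamB_compl (Λ : Finset (Site d)) (a : ↥Λ → Bool) (τ : Conf d) :
    hamB β 0 k Λ aᶜ τᶜ = hamB β 0 k Λ a τ := by
  simp only [hamB, mul_zero, zero_mul, add_zero, fill_compl, field_compl, mul_neg, Real.cosh_neg]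

lemma gibbsWB_compl (Λ : Finset (Site d)) (a : ↥Λ → Bool) (τ : Conf d) :
    gibbsWB β 0 k Λ aᶜ τᶜ = gibbsWB β 0 k Λ a τ := by
  rw [gibbsWB, gibbsWB, hamB_compl, ← Equiv.sum_comp (compl_involutive.toPerm _)]
  simp only [Function.Involutive.coe_toPerm, hamB_compl]

lemma gibbsAvg_compl (Λ : Finset (Site d)) (τ : Conf d) (G : Conf d → ℝ) :
    gibbsAvg β k Λ τᶜ G = gibbsAvg β k Λ τ (G ∘ compl) := by
  rw [gibbsAvg, gibbsAvg, ← Equiv.sum_comp (compl_involutive.toPerm _)]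
  simp only [Function.Involutive.coe_toPerm, fill_compl, gibbsWB_compl, Function.comp_apply]

end SpinFlip

section Cylinders

variable {d : ℕ}

lemma cylB_eq_cylinder (Λ : Finset (Site d)) (a : ↥Λ → Bool) :
    cylB Λ a = cylinder (α := fun _ => Bool) Λ {a} := by
  ext σ
  simp [cylB, funext_iff, Finset.restrict]

lemma measurableSet_cylB (Λ : Finset (Site d)) (a : ↥Λ → Bool) : MeasurableSet (cylB Λ a) := by
  rw [cylB_eq_cylinder]
  exact (measurableSet_singleton a).cylinder

lemma cylB_empty (a : ↥(∅ : Finset (Site d)) → Bool) : cylB ∅ a = Set.univ := by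
  ext σ
  simp [cylB]

def spinCylinders : Set (Set (Conf d)) := {s | ∃ Λ a, s = cylB Λ a}

lemma isPiSystem_spinCylinders : IsPiSystem (spinCylinders (d := d)) := by
  rintro _ ⟨Λ, a, rfl⟩ _ ⟨Λ', a', rfl⟩ ⟨σ₀, hσ₀, hσ₀'⟩
  refine ⟨Λ ∪ Λ', fun j => σ₀ j, ?_⟩
  ext σ
  simp only [cylB, Set.mem_inter_iff, Set.mem_ofPred_eq, Subtype.forall, Finset.mem_union] at *
  constructor
  · rintro ⟨h, h'⟩ j (hj | hj)
    · rw [h j hj, hσ₀ j hj]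
    · rw [h' j hj, hσ₀' j hj]
  · intro h
    exact ⟨fun j hj => (h j (Or.inl hj)).trans (hσ₀ j hj),
      fun j hj => (h j (Or.inr hj)).trans (hσ₀' j hj)⟩

lemma generateFrom_spinCylinders :
    MeasurableSpace.generateFrom spinCylinders = (inferInstance : MeasurableSpace (Conf d)) := by
  refine le_antisymm (MeasurableSpace.generateFrom_le ?_) ?_
  · rintro _ ⟨Λ, a, rfl⟩
    exact measurableSet_cylB Λ a
  · rw [← generateFrom_measurableCylinders]
    refine MeasurableSpace.generateFrom_le fun t ht => ?_
    obtain ⟨Λ, S, -, rfl⟩ := (mem_measurableCylinders t).1 ht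
    have hS : cylinder Λ S = ⋃ a ∈ S, cylB Λ a := by
      ext σ
      simp [cylB_eq_cylinder]
    rw [hS]
    exact MeasurableSet.biUnion S.to_countable fun a _ =>
      MeasurableSpace.measurableSet_generateFrom ⟨Λ, a, rfl⟩

lemma ext_of_cylB {μ ν : Measure (Conf d)} [IsFiniteMeasure μ]
    (h : ∀ Λ a, μ (cylB Λ a) = ν (cylB Λ a)) : μ = ν :=
  ext_of_generate_finite spinCylinders generateFrom_spinCylinders.symm isPiSystem_spinCylinders
    (by rintro _ ⟨Λ, a, rfl⟩; exact h Λ a)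
    (by simpa only [cylB_empty] using h ∅ isEmptyElim)

lemma indicator_cylB_eq_prod (Λ : Finset (Site d)) (a : ↥Λ → Bool) (σ : Conf d) :
    (cylB Λ a).indicator 1 σ
      = ∏ j ∈ Λ, if σ j = fill Λ a (fun _ => true) j then (1 : ℝ) else 0 := by
  classical
  have hmem : σ ∈ cylB Λ a ↔ ∀ j ∈ Λ, σ j = fill Λ a (fun _ => true) j := by
    simp only [cylB, Set.mem_ofPred_eq, Subtype.forall]
    exact forall₂_congr fun j hj => by rw [fill_apply_of_mem _ _ hj]
  simp only [Set.indicator_apply, hmem, Finset.prod_boole, Pi.one_apply]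

/-- The coefficients of the expansion of `∏_{j ∈ Λ} 1{σ_j = a_j}` obtained by writing
`1{σ_j = false} = 1 - 1{σ_j = true}`. -/
def cylCoeff (Λ : Finset (Site d)) (a : ↥Λ → Bool) (U : Finset (Site d)) : ℝ :=
  (∏ j ∈ U, if fill Λ a (fun _ => true) j then 0 else 1)
    * ∏ j ∈ Λ \ U, if fill Λ a (fun _ => true) j then 1 else -1

lemma indicator_cylB_eq_sum (Λ : Finset (Site d)) (a : ↥Λ → Bool) (σ : Conf d) :
    (cylB Λ a).indicator 1 σ
      = ∑ U ∈ Λ.powerset, cylCoeff Λ a U * (cylB (Λ \ U) fun _ => true).indicator 1 σ := by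
  have hfactor : ∀ j, (if σ j = fill Λ a (fun _ => true) j then (1 : ℝ) else 0)
      = (if fill Λ a (fun _ => true) j then 0 else 1)
        + (if fill Λ a (fun _ => true) j then 1 else -1) * if σ j then 1 else 0 := by
    intro j
    cases fill Λ a (fun _ => true) j <;> cases σ j <;> norm_num
  have hplus : ∀ T : Finset (Site d), (cylB T fun _ => true).indicator 1 σ
      = ∏ j ∈ T, if σ j then (1 : ℝ) else 0 := by
    intro T
    rw [indicator_cylB_eq_prod]
    refine Finset.prod_congr rfl fun j hj => ?_
    simp [fill_apply_of_mem _ _ hj]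
  simp only [indicator_cylB_eq_prod, hfactor, Finset.prod_add, Finset.prod_mul_distrib, hplus,
    cylCoeff, mul_assoc]

lemma measureReal_cylB_eq_sum (μ : Measure (Conf d)) [IsFiniteMeasure μ] (Λ : Finset (Site d))
    (a : ↥Λ → Bool) :
    μ.real (cylB Λ a)
      = ∑ U ∈ Λ.powerset, cylCoeff Λ a U * μ.real (cylB (Λ \ U) fun _ => true) := by
  rw [← integral_indicator_one (measurableSet_cylB Λ a),
    integral_congr_ae (ae_of_all μ (indicator_cylB_eq_sum Λ a)), integral_finsetSum]
  · simp only [integral_const_mul, integral_indicator_one (measurableSet_cylB _ _)]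
  · exact fun U _ => ((integrable_const (1 : ℝ)).indicator (measurableSet_cylB _ _)).const_mul _

lemma ext_of_cylB_true {μ ν : Measure (Conf d)} [IsFiniteMeasure μ] [IsFiniteMeasure ν]
    (h : ∀ T : Finset (Site d), μ (cylB T fun _ => true) = ν (cylB T fun _ => true)) :
    μ = ν := by
  refine ext_of_cylB fun Λ a => ?_
  have hreal : μ.real (cylB Λ a) = ν.real (cylB Λ a) := by
    rw [measureReal_cylB_eq_sum, measureReal_cylB_eq_sum]
    simp only [measureReal_def, h]
  rwa [measureReal_def, measureReal_def,
    ENNReal.toReal_eq_toReal_iff' (measure_ne_top _ _) (measure_ne_top _ _)] at hreal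

end Cylinders

section Local

variable {d : ℕ} {G : Conf d → ℝ}

lemma LocalFun.eq_fill (hG : LocalFun G) : ∃ Δ : Finset (Site d),
    ∀ σ, G σ = G (fill Δ (fun j => σ j) fun _ => true) := by
  obtain ⟨Δ, hΔ⟩ := hG
  exact ⟨Δ, fun σ => hΔ _ _ fun j hj => (fill_apply_of_mem (fun j => σ j) _ hj).symm⟩

lemma LocalFun.measurable (hG : LocalFun G) : Measurable G := by
  obtain ⟨Δ, hΔ⟩ := hG.eq_fill
  rw [funext hΔ]
  exact (measurable_of_countable fun b : ↥Δ → Bool => G (fill Δ b fun _ => true)).comp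
    (measurable_pi_lambda _ fun j => measurable_pi_apply j.1)

lemma LocalFun.integrable (hG : LocalFun G) (μ : Measure (Conf d)) [IsFiniteMeasure μ] :
    Integrable G μ := by
  obtain ⟨Δ, hΔ⟩ := hG.eq_fill
  refine .of_bound hG.measurable.aestronglyMeasurable
    (∑ b : ↥Δ → Bool, ‖G (fill Δ b fun _ => true)‖) (ae_of_all _ fun σ => ?_)
  rw [hΔ σ]
  exact Finset.single_le_sum (f := fun b => ‖G (fill Δ b fun _ => true)‖)
    (fun _ _ => norm_nonneg _) (Finset.mem_univ _)

lemma LocalFun.comp_compl (hG : LocalFun G) : LocalFun (G ∘ compl) := by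
  obtain ⟨Δ, hΔ⟩ := hG
  exact ⟨Δ, fun σ σ' h => hΔ _ _ fun j hj => by simp [h j hj]⟩

lemma LocalFun.const_sub (hG : LocalFun G) (c : ℝ) : LocalFun fun σ => c - G σ := by
  obtain ⟨Δ, hΔ⟩ := hG
  exact ⟨Δ, fun σ σ' h => congrArg (c - ·) (hΔ σ σ' h)⟩

lemma localFun_indicator_cylB (Λ : Finset (Site d)) (a : ↥Λ → Bool) :
    LocalFun ((cylB Λ a).indicator 1) :=
  ⟨Λ, fun σ σ' h => by
    simp only [indicator_cylB_eq_prod]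
    exact Finset.prod_congr rfl fun j hj => by rw [h j hj]⟩

end Local

section Dynamics

variable {d : ℕ} {β h : ℝ} {k : Site d → ℝ} {R : Finset (Site d)}

lemma abs_val_mul_tanh_le_one (s : Bool) (x : ℝ) : |val s * Real.tanh x| ≤ 1 := by
  rw [abs_mul]
  cases s <;> simp [val, (Real.abs_tanh_lt_one x).le]

lemma pval_nonneg (i : Site d) (s : Bool) (η : Conf d) : 0 ≤ pval β h k i s η := by
  have := (abs_le.1 (abs_val_mul_tanh_le_one s (β * field k i η + β * h))).1
  unfold pval
  linarith

lemma pval_le_one (i : Site d) (s : Bool) (η : Conf d) : pval β h k i s η ≤ 1 := by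
  have := (abs_le.1 (abs_val_mul_tanh_le_one s (β * field k i η + β * h))).2
  unfold pval
  linarith

def plusProb (β h : ℝ) (k : Site d → ℝ) (T : Finset (Site d)) (η : Conf d) : ℝ :=
  ∏ j ∈ T, pval β h k j true η

lemma plusProb_nonneg (T : Finset (Site d)) (η : Conf d) : 0 ≤ plusProb β h k T η :=
  Finset.prod_nonneg fun j _ => pval_nonneg j true η

lemma plusProb_le_one (T : Finset (Site d)) (η : Conf d) : plusProb β h k T η ≤ 1 :=
  Finset.prod_le_one (fun j _ => pval_nonneg j true η) fun j _ => pval_le_one j true η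

lemma plusProb_antitone (hβ : 0 ≤ β) (hR : ∀ x ∉ R, k x = 0) (hk : ∀ x, k x ≤ 0)
    (T : Finset (Site d)) : Antitone (plusProb β h k T) := by
  intro η η' hη
  refine Finset.prod_le_prod (fun j _ => pval_nonneg j true η') fun j _ => ?_
  have hf := mul_le_mul_of_nonneg_left (field_antitone hR hk j hη) hβ
  have := tanh_monotone (by linarith : β * field k j η' + β * h ≤ β * field k j η + β * h)
  simp only [pval, val, if_true, one_mul]
  linarith

lemma localFun_plusProb (hR : ∀ x ∉ R, k x = 0) (T : Finset (Site d)) :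
    LocalFun (plusProb β h k T) :=
  ⟨T - R, fun η η' hη => Finset.prod_congr rfl fun j hj => by
    rw [pval, pval, field_congr hR fun x hx => hη _ (Finset.sub_mem_sub hj hx)]⟩

variable {P : ProbabilityTheory.Kernel (Conf d) (Conf d)}

lemma kernel_cylB_true (hP : IsPCAB β h k P) (η : Conf d) (T : Finset (Site d)) :
    P η (cylB T fun _ => true) = ENNReal.ofReal (plusProb β h k T η) := by
  rw [hP, plusProb, ENNReal.ofReal_prod_of_nonneg fun j _ => pval_nonneg _ true η]
  exact Finset.prod_coe_sort T fun j => ENNReal.ofReal (pval β h k j true η)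

lemma measure_cylB_true_of_bind_eq (hR : ∀ x ∉ R, k x = 0) (hP : IsPCAB β h k P)
    {μ : Measure (Conf d)} [IsFiniteMeasure μ] (hμ : μ.bind P = μ) (T : Finset (Site d)) :
    μ (cylB T fun _ => true) = ENNReal.ofReal (∫ η, plusProb β h k T η ∂μ) := by
  conv_lhs => rw [← hμ]
  rw [Measure.bind_apply (measurableSet_cylB _ _) P.measurable.aemeasurable,
    lintegral_congr fun η => kernel_cylB_true hP η T,
    ← ofReal_integral_eq_lintegral_ofReal ((localFun_plusProb hR T).integrable μ)
      (ae_of_all _ (plusProb_nonneg T))]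

lemma pval_compl (i : Site d) (s : Bool) (η : Conf d) :
    pval β 0 k i s ηᶜ = pval β 0 k i sᶜ η := by
  rw [pval, pval, field_compl, mul_zero, add_zero, add_zero, mul_neg, Real.tanh_neg, val_compl]
  ring

lemma preimage_compl_cylB (Λ : Finset (Site d)) (a : ↥Λ → Bool) :
    compl ⁻¹' cylB Λ a = cylB Λ aᶜ := by
  ext σ
  simp [cylB]

lemma kernel_compl [ProbabilityTheory.IsMarkovKernel P] (hP : IsPCAB β 0 k P) (η : Conf d) :
    P ηᶜ = (P η).map compl :=
  ext_of_cylB fun Λ a => by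
    rw [Measure.map_apply measurable_compl_conf (measurableSet_cylB _ _), preimage_compl_cylB,
      hP, hP]
    exact Finset.prod_congr rfl fun j _ => by rw [pval_compl]; rfl

lemma bind_map_compl [ProbabilityTheory.IsMarkovKernel P] (hP : IsPCAB β 0 k P)
    (μ : Measure (Conf d)) : (μ.map compl).bind P = (μ.bind P).map compl := by
  ext s hs
  rw [Measure.bind_apply hs P.measurable.aemeasurable,
    lintegral_map (P.measurable_coe hs) measurable_compl_conf,
    Measure.map_apply measurable_compl_conf hs,
    Measure.bind_apply (measurable_compl_conf hs) P.measurable.aemeasurable]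
  exact lintegral_congr fun η => by
    rw [kernel_compl hP η, Measure.map_apply measurable_compl_conf hs]

end Dynamics

section StochasticOrder

variable {d : ℕ}

def StochLE (μ ν : Measure (Conf d)) : Prop :=
  ∀ G : Conf d → ℝ, LocalFun G → 0 ≤ G → Monotone G → ∫ σ, G σ ∂μ ≤ ∫ σ, G σ ∂ν

lemma monotone_indicator_cylB_true (T : Finset (Site d)) :
    Monotone ((cylB T fun _ => true).indicator (1 : Conf d → ℝ)) := by
  intro σ σ' hσ
  by_cases hmem : σ ∈ cylB T fun _ => true
  · have hmem' : σ' ∈ cylB T fun _ => true := fun j =>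
      le_antisymm (Bool.le_true _) (hmem j ▸ hσ j.1)
    rw [Set.indicator_of_mem hmem, Set.indicator_of_mem hmem']
    exact le_rfl
  · rw [Set.indicator_of_notMem hmem]
    exact Set.indicator_nonneg (fun _ _ => zero_le_one) _

lemma StochLE.measure_cylB_true_le {μ ν : Measure (Conf d)} [IsFiniteMeasure μ]
    [IsFiniteMeasure ν] (hle : StochLE μ ν) (T : Finset (Site d)) :
    μ (cylB T fun _ => true) ≤ ν (cylB T fun _ => true) := by
  have := hle _ (localFun_indicator_cylB T _) (Set.indicator_nonneg fun _ _ => zero_le_one)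
    (monotone_indicator_cylB_true T)
  rwa [integral_indicator_one (measurableSet_cylB _ _), integral_indicator_one
    (measurableSet_cylB _ _), measureReal_def, measureReal_def,
    ENNReal.toReal_le_toReal (measure_ne_top _ _) (measure_ne_top _ _)] at this

/-- On the event "all `+` on `T`", stationarity turns `μ ≤ ν` into the reverse inequality,
because the probability of producing that event is antitone in the previous configuration. -/
lemma eq_of_stochLE_of_bind_eq {β h : ℝ} {k : Site d → ℝ} {R : Finset (Site d)} (hβ : 0 ≤ β)
    (hR : ∀ x ∉ R, k x = 0) (hk : ∀ x, k x ≤ 0) {P : ProbabilityTheory.Kernel (Conf d) (Conf d)}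
    (hP : IsPCAB β h k P) {μ ν : Measure (Conf d)} [IsProbabilityMeasure μ]
    [IsProbabilityMeasure ν] (hle : StochLE μ ν) (hμ : μ.bind P = μ) (hν : ν.bind P = ν) :
    μ = ν := by
  refine ext_of_cylB_true fun T => le_antisymm (hle.measure_cylB_true_le T) ?_
  rw [measure_cylB_true_of_bind_eq hR hP hν, measure_cylB_true_of_bind_eq hR hP hμ]
  refine ENNReal.ofReal_le_ofReal ?_
  have hint := (localFun_plusProb (β := β) (h := h) hR T).integrable
  have := hle (fun η => 1 - plusProb β h k T η) ((localFun_plusProb hR T).const_sub 1)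
    (fun η => sub_nonneg.2 (plusProb_le_one T η))
    fun η η' hη => sub_le_sub_left (plusProb_antitone hβ hR hk T hη) 1
  rw [integral_sub (integrable_const 1) (hint μ), integral_sub (integrable_const 1) (hint ν),
    integral_const, integral_const] at this
  simp only [probReal_univ, smul_eq_mul, mul_one] at this
  linarith

end StochasticOrder

section Lattice

lemma boxCc_mono {d : ℕ} : Monotone (boxCc (d := d)) := by
  intro m n hmn x hx
  simp only [boxCc, Fintype.mem_piFinset, Finset.mem_Icc] at hx ⊢
  exact fun t => ⟨le_trans (by simpa using hmn) (hx t).1, (hx t).2.trans (by simpa using hmn)⟩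

lemma one_lt_normSq_of_notMem_boxCc_one {d : ℕ} {x : Site d} (hx : x ∉ boxCc 1) :
    1 < normSq x := by
  simp only [boxCc, Fintype.mem_piFinset, Finset.mem_Icc, not_forall, Nat.cast_one] at hx
  obtain ⟨t, ht⟩ := hx
  have hsq : 1 < x t ^ 2 := by
    rcases not_and_or.1 ht with h | h <;> nlinarith [not_le.1 h]
  exact hsq.trans_le (Finset.single_le_sum (fun s _ => sq_nonneg (x s)) (Finset.mem_univ t))

lemma eq_of_normSq_le_one {x : Site 2} (hx : normSq x ≤ 1) :
    x = 0 ∨ x = e1 ∨ x = -e1 ∨ x = e2 ∨ x = -e2 := by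
  have hsum : x 0 ^ 2 + x 1 ^ 2 ≤ 1 := by simpa [normSq, Fin.sum_univ_two] using hx
  have hx₀ : -1 ≤ x 0 ∧ x 0 ≤ 1 := by constructor <;> nlinarith [sq_nonneg (x 1)]
  have hx₁ : -1 ≤ x 1 ∧ x 1 ≤ 1 := by constructor <;> nlinarith [sq_nonneg (x 0)]
  have hx' : x = ![x 0, x 1] := by
    ext i
    fin_cases i <;> rfl
  rw [hx']
  generalize x 0 = a, x 1 = b at hsum hx₀ hx₁
  obtain ⟨ha, ha'⟩ := hx₀
  obtain ⟨hb, hb'⟩ := hx₁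
  interval_cases a <;> interval_cases b <;> first | decide | (norm_num at hsum)

lemma k_nonpos {k : Site 2 → ℝ} (hsym : ∀ i : Site 2, k (-i) = k i)
    (hrange : ∀ i : Site 2, (1 : ℝ) < (normSq i : ℝ) → k i = 0)
    (hk0 : k 0 ≤ 0) (hk1 : k e1 < 0) (hk2 : k e2 < 0) (x : Site 2) : k x ≤ 0 := by
  by_cases hx : (1 : ℝ) < (normSq x : ℝ)
  · exact (hrange x hx).le
  · rcases eq_of_normSq_le_one (by exact_mod_cast not_lt.1 hx) with rfl | rfl | rfl | rfl | rfl
    · exact hk0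
    · exact hk1.le
    · exact (hsym e1).symm ▸ hk1.le
    · exact hk2.le
    · exact (hsym e2).symm ▸ hk2.le

end Lattice

section Limits

variable {β : ℝ} {k : Site 2 → ℝ}

lemma integral_gibbsMeas {G : Conf 2 → ℝ} (hG : Measurable G) (Λ : Finset (Site 2))
    (τ : Conf 2) : ∫ σ, G σ ∂gibbsMeas β k Λ τ = gibbsAvg β k Λ τ G := by
  rw [gibbsMeas, integral_finsetSum_measure fun a _ =>
    (integrable_dirac' hG.stronglyMeasurable (by simp)).smul_measure ENNReal.ofReal_ne_top]
  refine Finset.sum_congr rfl fun a _ => ?_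
  rw [integral_smul_measure, integral_dirac' _ _ hG.stronglyMeasurable,
    ENNReal.toReal_ofReal (gibbsWB_nonneg Λ a τ), smul_eq_mul, mul_comm]

def IsBoxLimit (β : ℝ) (k : Site 2 → ℝ) (τ : Conf 2) (φ : ℕ → ℕ) (μ : Measure (Conf 2)) :
    Prop :=
  ∀ f : Conf 2 → ℝ, LocalFun f →
    Tendsto (fun n => ∫ σ, f σ ∂gibbsMeas β k (boxCc (φ n)) τ) atTop (nhds (∫ σ, f σ ∂μ))

lemma IsBoxLimit.tendsto_gibbsAvg {τ : Conf 2} {φ : ℕ → ℕ} {μ : Measure (Conf 2)}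
    (hμ : IsBoxLimit β k τ φ μ) {G : Conf 2 → ℝ} (hG : LocalFun G) :
    Tendsto (fun n => gibbsAvg β k (boxCc (φ n)) τ G) atTop (nhds (∫ σ, G σ ∂μ)) :=
  (hμ G hG).congr fun _ => integral_gibbsMeas hG.measurable _ _

lemma stochLE_of_isBoxLimit {R : Finset (Site 2)} (hβ : 0 ≤ β) (hR : ∀ x ∉ R, k x = 0)
    (hk : ∀ x, k x ≤ 0) {φp φm : ℕ → ℕ} {μp μm : Measure (Conf 2)}
    (hp : IsBoxLimit β k (fun _ => true) φp μp) (hm : IsBoxLimit β k (fun _ => false) φm μm) :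
    StochLE μm μp := fun _ hG hG₀ hGm =>
  le_of_tendsto_of_tendsto' (hm.tendsto_gibbsAvg hG) (hp.tendsto_gibbsAvg hG) fun _ =>
    gibbsAvg_false_le_true hβ hR hk _ _ hG₀ hGm

lemma eq_of_monotone_of_tendsto_comp {u : ℕ → ℝ} (hu : Monotone u) {φ ψ : ℕ → ℕ}
    (hφ : Tendsto φ atTop atTop) (hψ : Tendsto ψ atTop atTop) {x y : ℝ}
    (hx : Tendsto (u ∘ φ) atTop (nhds x)) (hy : Tendsto (u ∘ ψ) atTop (nhds y)) : x = y := by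
  rcases tendsto_atTop_of_monotone hu with h | ⟨l, h⟩
  · exact absurd (h.comp hφ) (not_tendsto_atTop_of_tendsto_nhds hx)
  · exact (tendsto_nhds_unique hx (h.comp hφ)).trans (tendsto_nhds_unique (h.comp hψ) hy)

/-- Both `μ⁻` and the flip of `μ⁺` are limits of the volume-monotone sequence of `-` boundary
Gibbs measures along the boxes, tested on the increasing events "all `+` on `T`". -/
lemma map_compl_eq_of_isBoxLimit {R : Finset (Site 2)} (hβ : 0 ≤ β) (hR : ∀ x ∉ R, k x = 0)
    (hk : ∀ x, k x ≤ 0) {φp φm : ℕ → ℕ} {μp μm : Measure (Conf 2)} [IsProbabilityMeasure μp]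
    [IsProbabilityMeasure μm] (hp : IsBoxLimit β k (fun _ => true) φp μp)
    (hφp : Tendsto φp atTop atTop) (hm : IsBoxLimit β k (fun _ => false) φm μm)
    (hφm : Tendsto φm atTop atTop) : μm = μp.map compl := by
  have : IsProbabilityMeasure (μp.map compl) :=
    Measure.isProbabilityMeasure_map measurable_compl_conf.aemeasurable
  refine ext_of_cylB_true fun T => ?_
  set G := (cylB T fun _ => true).indicator (1 : Conf 2 → ℝ)
  have hG : LocalFun G := localFun_indicator_cylB T _
  have hmono : Monotone fun n => gibbsAvg β k (boxCc n) (fun _ => false) G :=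
    fun m n hmn => gibbsAvg_false_mono_volume hβ hR hk (boxCc_mono hmn)
      (Set.indicator_nonneg fun _ _ => zero_le_one) (monotone_indicator_cylB_true T)
  have hflip : Tendsto (fun n => gibbsAvg β k (boxCc (φp n)) (fun _ => false) G) atTop
      (nhds (∫ σ, G σ ∂μp.map compl)) := by
    rw [integral_map measurable_compl_conf.aemeasurable hG.measurable.aestronglyMeasurable]
    exact (hp.tendsto_gibbsAvg hG.comp_compl).congr fun n =>
      (gibbsAvg_compl (boxCc (φp n)) (fun _ => true) G).symm
  have := eq_of_monotone_of_tendsto_comp hmono hφm hφp (hm.tendsto_gibbsAvg hG) hflip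
  rwa [integral_indicator_one (measurableSet_cylB _ _), integral_indicator_one
    (measurableSet_cylB _ _), measureReal_def, measureReal_def,
    ENNReal.toReal_eq_toReal_iff' (measure_ne_top _ _) (measure_ne_top _ _)] at this

end Limits

/-- (`d = 2`, `h = 0`, range-one `k` with `k(0) ≤ 0`, `k(e₁) < 0`,
`k(e₂) < 0`.) If the Gibbs measures `μ⁺` and `μ⁻`, obtained as weak limits of the finite
volume Gibbs measures with `+`, resp. `-`, boundary conditions, are different, then `μ⁺`
is not stationary for the infinite volume PCA `P`. -/
theorem stmt17 (β : ℝ) (hβ : 0 < β)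
    (k : Site 2 → ℝ) (hsym : ∀ i : Site 2, k (-i) = k i)
    (hrange : ∀ i : Site 2, (1 : ℝ) < (normSq i : ℝ) → k i = 0)
    (hk0 : k 0 ≤ 0) (hk1 : k e1 < 0) (hk2 : k e2 < 0)
    (P : ProbabilityTheory.Kernel (Conf 2) (Conf 2)) [ProbabilityTheory.IsMarkovKernel P]
    (hP : IsPCAB β 0 k P)
    (μp μm : Measure (Conf 2)) [IsProbabilityMeasure μp] [IsProbabilityMeasure μm]
    (φp : ℕ → ℕ) (hφp : StrictMono φp)
    (hlimp : ∀ f : Conf 2 → ℝ, LocalFun f →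
      Tendsto (fun n => ∫ σ, f σ ∂(gibbsMeas β k (boxCc (φp n)) fun _ => true)) atTop
        (nhds (∫ σ, f σ ∂μp)))
    (φm : ℕ → ℕ) (hφm : StrictMono φm)
    (hlimm : ∀ f : Conf 2 → ℝ, LocalFun f →
      Tendsto (fun n => ∫ σ, f σ ∂(gibbsMeas β k (boxCc (φm n)) fun _ => false)) atTop
        (nhds (∫ σ, f σ ∂μm)))
    (hne : μp ≠ μm) :
    μp.bind ⇑P ≠ μp := by
  intro hstat
  have hR : ∀ x ∉ boxCc 1, k x = 0 := fun x hx =>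
    hrange x (by exact_mod_cast one_lt_normSq_of_notMem_boxCc_one hx)
  have hk : ∀ x, k x ≤ 0 := k_nonpos hsym hrange hk0 hk1 hk2
  have hflip : μm = μp.map compl :=
    map_compl_eq_of_isBoxLimit hβ.le hR hk hlimp hφp.tendsto_atTop hlimm hφm.tendsto_atTop
  have hstatm : μm.bind P = μm := by rw [hflip, bind_map_compl hP, hstat]
  exact hne (eq_of_stochLE_of_bind_eq hβ.le hR hk hP
    (stochLE_of_isBoxLimit hβ.le hR hk hlimp hlimm) hstatm hstat).symm

end
end PCA
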